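/- arXiv:quant-ph/0209030 — 2 statements merged into one kernel-verified Lean document; each statement's English description precedes it below -/
import Mathlib

section
/- Monotonicity of Kullback–Leibler divergence under stochastic maps (finite case): if P and Q are probability mass functions on a finite set X, and K : X → (probability mass functions on a finite set Y) is a stochastic kernel, then D(KQ ‖ KP) ≤ D(Q ‖ P), where (KP)(y) = Σ_x K(x)(y) P(x). -/
/-- Kullback–Leibler divergence of two probability mass functions on a finite type,
with the convention `0 · log (0/·) = 0` (note `Real.log 0 = 0` in Mathlib). -/
noncomputable def klDiv {X : Type*} [Fintype X] (Q P : X → ℝ) : ℝ :=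
  ∑ x, Q x * Real.log (Q x / P x)

/-- `log t ≥ 1 - t⁻¹` for `t > 0`. -/
lemma one_sub_inv_le_log {t : ℝ} (ht : 0 < t) : 1 - t⁻¹ ≤ Real.log t := by
  have h := Real.log_le_sub_one_of_pos (inv_pos.mpr ht)
  rw [Real.log_inv] at h
  linarith

/-- The log-sum inequality. -/
lemma log_sum_ineq {X : Type*} [Fintype X] (a b : X → ℝ)
    (ha : ∀ x, 0 ≤ a x) (hb : ∀ x, 0 ≤ b x)
    (hab : ∀ x, b x = 0 → a x = 0) :
    (∑ x, a x) * Real.log ((∑ x, a x) / (∑ x, b x)) ≤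
      ∑ x, a x * Real.log (a x / b x) := by
  set A := ∑ x, a x with hA
  set B := ∑ x, b x with hB
  rcases eq_or_lt_of_le (Finset.sum_nonneg fun x _ => hb x) with hB0 | hB0
  · -- B = 0, hence all b = 0, all a = 0
    have hb0 : ∀ x ∈ Finset.univ, b x = 0 :=
      (Finset.sum_eq_zero_iff_of_nonneg fun x _ => hb x).mp hB0.symm
    have ha0 : ∀ x, a x = 0 := fun x => hab x (hb0 x (Finset.mem_univ x))
    have hA0 : A = 0 := Finset.sum_eq_zero fun x _ => ha0 x
    simp [hA0, ha0]
  · rcases eq_or_lt_of_le (Finset.sum_nonneg fun x _ => ha x) with hA0 | hA0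
    · have ha0 : ∀ x ∈ Finset.univ, a x = 0 :=
        (Finset.sum_eq_zero_iff_of_nonneg fun x _ => ha x).mp hA0.symm
      have hr : (∑ x, a x * Real.log (a x / b x)) = 0 :=
        Finset.sum_eq_zero fun x hx => by rw [ha0 x hx, zero_mul]
      rw [hr, hA, ← hA0, zero_mul]
    · -- main case: A > 0, B > 0
      have key : ∀ x, a x * Real.log (A / B) + a x - b x * (A / B)
          ≤ a x * Real.log (a x / b x) := by
        intro x
        rcases eq_or_lt_of_le (ha x) with hax | hax
        · rw [← hax]
          simp only [zero_mul, zero_add, zero_sub, neg_nonpos.symm]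
          have : 0 ≤ b x * (A / B) :=
            mul_nonneg (hb x) (div_nonneg hA0.le hB0.le)
          linarith [Real.log_nonneg (le_refl 1)]
        · have hbx : 0 < b x := by
            rcases eq_or_lt_of_le (hb x) with h | h
            · exact absurd (hab x h.symm) (ne_of_gt hax)
            · exact h
          have ht : 0 < a x * B / (b x * A) :=
            div_pos (mul_pos hax hB0) (mul_pos hbx hA0)
          have h1 : 1 - (a x * B / (b x * A))⁻¹ ≤ Real.log (a x * B / (b x * A)) :=
            one_sub_inv_le_log ht
          have hlog : Real.log (a x * B / (b x * A)) =
              Real.log (a x / b x) - Real.log (A / B) := by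
            rw [Real.log_div (by positivity) (by positivity),
              Real.log_mul (ne_of_gt hax) (ne_of_gt hB0),
              Real.log_mul (ne_of_gt hbx) (ne_of_gt hA0),
              Real.log_div (ne_of_gt hax) (ne_of_gt hbx),
              Real.log_div (ne_of_gt hA0) (ne_of_gt hB0)]
            ring
          have hinv : (a x * B / (b x * A))⁻¹ = b x * A / (a x * B) := by
            rw [inv_div]
          rw [hlog, hinv] at h1
          have h2 : a x * (1 - b x * A / (a x * B)) ≤
              a x * (Real.log (a x / b x) - Real.log (A / B)) :=
            mul_le_mul_of_nonneg_left h1 (ha x)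
          have h3 : a x * (b x * A / (a x * B)) = b x * (A / B) := by
            field_simp
          rw [mul_sub, h3] at h2
          rw [mul_sub] at h2
          linarith
      calc A * Real.log (A / B)
          = ∑ x, (a x * Real.log (A / B) + a x - b x * (A / B)) := by
            have hBA : B * (A / B) = A := by field_simp; exact mul_div_cancel_left₀ A (ne_of_gt hB0)
            rw [Finset.sum_sub_distrib, Finset.sum_add_distrib, ← Finset.sum_mul,
              ← Finset.sum_mul, ← hA, ← hB, hBA]
            ring
        _ ≤ ∑ x, a x * Real.log (a x / b x) :=
            Finset.sum_le_sum fun x _ => key x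

/-- Monotonicity of Kullback–Leibler divergence under a stochastic (Markov) kernel. -/
theorem klDiv_stochastic_map_le
    {X Y : Type*} [Fintype X] [Fintype Y]
    (P Q : X → ℝ)
    (hP0 : ∀ x, 0 ≤ P x) (hP1 : ∑ x, P x = 1)
    (hQ0 : ∀ x, 0 ≤ Q x) (hQ1 : ∑ x, Q x = 1)
    (hac : ∀ x, P x = 0 → Q x = 0)
    (K : X → Y → ℝ)
    (hK0 : ∀ x y, 0 ≤ K x y) (hK1 : ∀ x, ∑ y, K x y = 1) :
    klDiv (fun y => ∑ x, K x y * Q x) (fun y => ∑ x, K x y * P x) ≤ klDiv Q P := by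
  unfold klDiv
  have step1 : ∀ y, (∑ x, K x y * Q x) * Real.log ((∑ x, K x y * Q x) / (∑ x, K x y * P x))
      ≤ ∑ x, (K x y * Q x) * Real.log ((K x y * Q x) / (K x y * P x)) := by
    intro y
    apply log_sum_ineq
    · exact fun x => mul_nonneg (hK0 x y) (hQ0 x)
    · exact fun x => mul_nonneg (hK0 x y) (hP0 x)
    · intro x h
      rcases mul_eq_zero.mp h with h | h
      · rw [h, zero_mul]
      · rw [hac x h, mul_zero]
  calc ∑ y, (∑ x, K x y * Q x) * Real.log ((∑ x, K x y * Q x) / (∑ x, K x y * P x))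
      ≤ ∑ y, ∑ x, (K x y * Q x) * Real.log ((K x y * Q x) / (K x y * P x)) :=
        Finset.sum_le_sum fun y _ => step1 y
    _ = ∑ x, Q x * Real.log (Q x / P x) := by
        rw [Finset.sum_comm]
        apply Finset.sum_congr rfl
        intro x _
        have : ∀ y, (K x y * Q x) * Real.log ((K x y * Q x) / (K x y * P x))
            = K x y * (Q x * Real.log (Q x / P x)) := by
          intro y
          rcases eq_or_lt_of_le (hK0 x y) with h | h
          · rw [← h]; ring
          · rw [mul_div_mul_left _ _ (ne_of_gt h)]; ring
        rw [Finset.sum_congr rfl fun y _ => this y, ← Finset.sum_mul, hK1 x, one_mul]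
end

section
/- Probability of a type class: for an i.i.d. source with distribution p on {1,…,d} and a type 𝐧 with Σ n_i = n, the probability that the empirical frequency vector equals 𝐧 satisfies (n+1)^{−d} exp(−n D(𝐧/n ‖ p)) ≤ P(type = 𝐧) ≤ exp(−n D(𝐧/n ‖ p)) (logs natural, divergence natural-log). -/
open Finset

/-- `(b+c)! ≤ b! * (b+c)^c`. -/
lemma aux_fact_le (b : ℕ) : ∀ c : ℕ, (b + c).factorial ≤ b.factorial * (b + c) ^ c
  | 0 => by simp
  | c + 1 => by
    calc (b + (c+1)).factorial = (b + c + 1) * (b + c).factorial := by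
          rw [← Nat.add_assoc, Nat.factorial_succ]
      _ ≤ (b + c + 1) * (b.factorial * (b + c) ^ c) :=
          Nat.mul_le_mul_left _ (aux_fact_le b c)
      _ ≤ (b + c + 1) * (b.factorial * (b + c + 1) ^ c) := by
          exact Nat.mul_le_mul_left _ (Nat.mul_le_mul_left _
            (Nat.pow_le_pow_left (Nat.le_succ _) _))
      _ = b.factorial * (b + (c+1)) ^ (c + 1) := by ring

/-- Key lemma: `a! * a^b ≤ b! * a^a` whenever `a = 0 → b = 0`. -/
lemma aux_key (a b : ℕ) (h : a = 0 → b = 0) :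
    a.factorial * a ^ b ≤ b.factorial * a ^ a := by
  rcases Nat.eq_zero_or_pos a with ha | ha
  · simp [ha, h ha]
  rcases le_or_gt b a with hba | hab
  · calc a.factorial * a ^ b = (b + (a - b)).factorial * a ^ b := by
          rw [Nat.add_sub_cancel' hba]
      _ ≤ (b.factorial * (b + (a - b)) ^ (a - b)) * a ^ b :=
          Nat.mul_le_mul_right _ (aux_fact_le b (a - b))
      _ = b.factorial * (a ^ (a - b) * a ^ b) := by rw [Nat.add_sub_cancel' hba]; ring
      _ = b.factorial * a ^ a := by rw [← pow_add, Nat.sub_add_cancel hba]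
  · calc a.factorial * a ^ b = a.factorial * a ^ (b - a) * a ^ a := by
          rw [mul_assoc, ← pow_add, Nat.sub_add_cancel hab.le]
      _ ≤ b.factorial * a ^ a :=
          Nat.mul_le_mul_right _ (Nat.factorial_mul_pow_sub_le_factorial hab.le)

/-- Maximality of the own type, in `ℕ`. -/
lemma aux_max (d n : ℕ) (t k : Fin d → ℕ) (hsum : ∑ i, t i = n) (hks : ∑ i, k i = n)
    (hz : ∀ i, t i = 0 → k i = 0) :
    Nat.multinomial Finset.univ k * ∏ i, t i ^ k i
      ≤ Nat.multinomial Finset.univ t * ∏ i, t i ^ t i := by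
  have hterm : (∏ i, (t i).factorial) * ∏ i, t i ^ k i
      ≤ (∏ i, (k i).factorial) * ∏ i, t i ^ t i := by
    rw [← Finset.prod_mul_distrib, ← Finset.prod_mul_distrib]
    exact Finset.prod_le_prod' fun i _ => aux_key (t i) (k i) (hz i)
  have hk := Nat.multinomial_spec Finset.univ k
  have ht := Nat.multinomial_spec Finset.univ t
  rw [hks] at hk; rw [hsum] at ht
  have hpos : 0 < (∏ i, (k i).factorial) * ∏ i, (t i).factorial :=
    Nat.mul_pos (Finset.prod_pos fun i _ => Nat.factorial_pos _)
      (Finset.prod_pos fun i _ => Nat.factorial_pos _)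
  refine Nat.le_of_mul_le_mul_left ?_ hpos
  calc ((∏ i, (k i).factorial) * ∏ i, (t i).factorial)
        * (Nat.multinomial Finset.univ k * ∏ i, t i ^ k i)
      = ((∏ i, (k i).factorial) * Nat.multinomial Finset.univ k)
        * ((∏ i, (t i).factorial) * ∏ i, t i ^ k i) := by ring
    _ = n.factorial * ((∏ i, (t i).factorial) * ∏ i, t i ^ k i) := by rw [hk]
    _ ≤ n.factorial * ((∏ i, (k i).factorial) * ∏ i, t i ^ t i) :=
        Nat.mul_le_mul_left _ hterm
    _ = ((∏ i, (t i).factorial) * Nat.multinomial Finset.univ t)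
        * ((∏ i, (k i).factorial) * ∏ i, t i ^ t i) := by rw [ht]
    _ = ((∏ i, (k i).factorial) * ∏ i, (t i).factorial)
        * (Nat.multinomial Finset.univ t * ∏ i, t i ^ t i) := by ring

/-- Probability of a type class: for an i.i.d. source `p` on `{1,…,d}` and a type `t`
with `Σ nᵢ = n`, the probability `P(type = t) = (n!/(n₁!⋯n_d!)) Πᵢ pᵢ^{nᵢ}` satisfies
`(n+1)^{−d} exp(−n D(t/n‖p)) ≤ P(type = t) ≤ exp(−n D(t/n‖p))`. -/
theorem type_class_probability_bounds
    (d n : ℕ) (hd : 1 ≤ d) (hn : 1 ≤ n)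
    (p : Fin d → ℝ) (hp0 : ∀ i, 0 < p i) (hp1 : ∑ i, p i = 1)
    (t : Fin d → ℕ) (hsum : ∑ i, t i = n) :
    ((n + 1 : ℝ) ^ d)⁻¹ * Real.exp (-(n : ℝ) * klDiv (fun i : Fin d => (t i : ℝ) / n) p)
      ≤ (Nat.multinomial Finset.univ t : ℝ) * ∏ i, p i ^ t i
    ∧ (Nat.multinomial Finset.univ t : ℝ) * ∏ i, p i ^ t i
      ≤ Real.exp (-(n : ℝ) * klDiv (fun i : Fin d => (t i : ℝ) / n) p) := by
  have hn0 : (0:ℝ) < (n:ℝ) := by exact_mod_cast hn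
  set q : Fin d → ℝ := fun i => (t i : ℝ) / n with hq_def
  have hq_nonneg : ∀ i, 0 ≤ q i := fun i => div_nonneg (Nat.cast_nonneg _) hn0.le
  have hqsum : ∑ i, q i = 1 := by
    rw [hq_def, ← Finset.sum_div]
    rw [show ∑ i, ((t i : ℝ)) = (n:ℝ) by exact_mod_cast congrArg Nat.cast hsum]
    exact div_self hn0.ne'
  have hqt_pos : 0 < ∏ i, q i ^ t i := by
    apply Finset.prod_pos
    intro i _
    rcases Nat.eq_zero_or_pos (t i) with h | h
    · simp [h]
    · exact pow_pos (div_pos (by exact_mod_cast h) hn0) _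
  have hpt_pos : 0 < ∏ i, p i ^ t i :=
    Finset.prod_pos fun i _ => pow_pos (hp0 i) _
  -- identity for the exponential
  have hlog : -(n:ℝ) * klDiv q p
      = Real.log ((∏ i, p i ^ t i) / (∏ i, q i ^ t i)) := by
    rw [Real.log_div hpt_pos.ne' hqt_pos.ne',
      Real.log_prod (fun i _ => (pow_pos (hp0 i) _).ne'),
      Real.log_prod (fun i _ => by
        rcases Nat.eq_zero_or_pos (t i) with h | h
        · simp [h]
        · exact (pow_pos (div_pos (by exact_mod_cast h) hn0) _).ne'),
      ← Finset.sum_sub_distrib, klDiv, Finset.mul_sum]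
    refine Finset.sum_congr rfl fun i _ => ?_
    rcases Nat.eq_zero_or_pos (t i) with h | h
    · simp [hq_def, h]
    · have hq_pos : 0 < q i := div_pos (by exact_mod_cast h) hn0
      have hnq : (n:ℝ) * q i = (t i : ℝ) := by
        rw [hq_def]; field_simp
      rw [Real.log_div hq_pos.ne' (hp0 i).ne', Real.log_pow, Real.log_pow]
      linear_combination (Real.log (p i) - Real.log (q i)) * hnq
  have hE : Real.exp (-(n:ℝ) * klDiv q p)
      = (∏ i, p i ^ t i) / (∏ i, q i ^ t i) := by
    rw [hlog, Real.exp_log (div_pos hpt_pos hqt_pos)]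
  set A : ℝ := (Nat.multinomial Finset.univ t : ℝ) * ∏ i, q i ^ t i with hA_def
  have hPA : (Nat.multinomial Finset.univ t : ℝ) * ∏ i, p i ^ t i
      = A * Real.exp (-(n:ℝ) * klDiv q p) := by
    rw [hE, hA_def]; field_simp
  -- multinomial theorem
  have hone : (1:ℝ) = ∑ k ∈ Finset.piAntidiag Finset.univ n,
      (Nat.multinomial Finset.univ k : ℝ) * ∏ i, q i ^ k i := by
    calc (1:ℝ) = (∑ i, q i) ^ n := by rw [hqsum, one_pow]
      _ = _ := Finset.sum_pow_eq_sum_piAntidiag _ _ _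
  have ht_mem : t ∈ Finset.piAntidiag Finset.univ n := by
    simp [Finset.mem_piAntidiag, hsum]
  have hterm_nonneg : ∀ k : Fin d → ℕ,
      0 ≤ (Nat.multinomial Finset.univ k : ℝ) * ∏ i, q i ^ k i := fun k =>
    mul_nonneg (Nat.cast_nonneg _)
      (Finset.prod_nonneg fun i _ => pow_nonneg (hq_nonneg i) _)
  have hA_le : A ≤ 1 := by
    rw [hone]
    exact Finset.single_le_sum (fun k _ => hterm_nonneg k) ht_mem
  -- maximality over types
  have hmax : ∀ k ∈ Finset.piAntidiag Finset.univ n,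
      (Nat.multinomial Finset.univ k : ℝ) * ∏ i, q i ^ k i ≤ A := by
    intro k hk
    obtain ⟨hks, -⟩ := (Finset.mem_piAntidiag).mp hk
    by_cases hz : ∀ i, t i = 0 → k i = 0
    · have hqk : ∏ i, q i ^ k i = (∏ i, (t i : ℝ) ^ k i) / (n:ℝ) ^ n := by
        rw [hq_def]
        simp_rw [div_pow]
        rw [Finset.prod_div_distrib, Finset.prod_pow_eq_pow_sum, hks]
      have hqt : ∏ i, q i ^ t i = (∏ i, (t i : ℝ) ^ t i) / (n:ℝ) ^ n := by
        rw [hq_def]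
        simp_rw [div_pow]
        rw [Finset.prod_div_distrib, Finset.prod_pow_eq_pow_sum, hsum]
      rw [hA_def, hqk, hqt, mul_div_assoc', mul_div_assoc',
        div_le_div_iff_of_pos_right (pow_pos hn0 n)]
      exact_mod_cast aux_max d n t k hsum hks hz
    · push_neg at hz
      obtain ⟨i, hti, hki⟩ := hz
      have : ∏ j, q j ^ k j = 0 := by
        apply Finset.prod_eq_zero (Finset.mem_univ i)
        rw [hq_def]
        simp [hti, zero_pow hki]
      rw [this, mul_zero]
      exact mul_nonneg (Nat.cast_nonneg _) hqt_pos.le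
  -- number of types
  have hcard : ((Finset.piAntidiag (Finset.univ : Finset (Fin d)) n).card : ℝ)
      ≤ ((n:ℝ) + 1) ^ d := by
    have hsub : Finset.piAntidiag (Finset.univ : Finset (Fin d)) n
        ⊆ Fintype.piFinset (fun _ : Fin d => Finset.range (n+1)) := by
      intro k hk
      obtain ⟨hks, -⟩ := (Finset.mem_piAntidiag).mp hk
      rw [Fintype.mem_piFinset]
      intro i
      rw [Finset.mem_range, Nat.lt_succ_iff, ← hks]
      exact Finset.single_le_sum (fun j _ => Nat.zero_le _) (Finset.mem_univ i)
    calc ((Finset.piAntidiag (Finset.univ : Finset (Fin d)) n).card : ℝ)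
        ≤ ((Fintype.piFinset (fun _ : Fin d => Finset.range (n+1))).card : ℝ) := by
          exact_mod_cast Finset.card_le_card hsub
      _ = ((n:ℝ) + 1) ^ d := by
          rw [Fintype.card_piFinset]
          push_cast [Finset.card_range]
          simp
  have hpowpos : (0:ℝ) < ((n:ℝ) + 1) ^ d := by positivity
  have hA_ge : (((n:ℝ) + 1) ^ d)⁻¹ ≤ A := by
    have h1 : (1:ℝ) ≤ ((n:ℝ) + 1) ^ d * A := by
      calc (1:ℝ) = ∑ k ∈ Finset.piAntidiag Finset.univ n,
            (Nat.multinomial Finset.univ k : ℝ) * ∏ i, q i ^ k i := hone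
        _ ≤ ∑ _k ∈ Finset.piAntidiag Finset.univ n, A := Finset.sum_le_sum hmax
        _ = ((Finset.piAntidiag (Finset.univ : Finset (Fin d)) n).card : ℝ) * A := by
            rw [Finset.sum_const, nsmul_eq_mul]
        _ ≤ ((n:ℝ) + 1) ^ d * A := by
            have hA0 : 0 ≤ A := hterm_nonneg t
            exact mul_le_mul_of_nonneg_right hcard hA0
    rw [inv_eq_one_div, div_le_iff₀ hpowpos]
    linarith [h1]
  constructor
  · rw [hPA]
    exact mul_le_mul_of_nonneg_right hA_ge (Real.exp_pos _).le
  · rw [hPA]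
    calc A * Real.exp (-(n:ℝ) * klDiv q p)
        ≤ 1 * Real.exp (-(n:ℝ) * klDiv q p) :=
          mul_le_mul_of_nonneg_right hA_le (Real.exp_pos _).le
      _ = _ := one_mul _
end
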